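/- Local Lipschitz continuity of the driver in the Brownian variable: There exists a constant C > 0 (depending only on λ, σ, π̲, π̄ and C_{κ,η}) such that |f(z,u) − f(z',u)| ≤ C (1 + |z| + |z'|) |z − z'| for all z, z' ∈ ℝ and every bounded Borel function u : ℝ → ℝ with ∫ u² dν < ∞. -/
import Mathlib
open MeasureTheory Set

lemma aux_integral_lb (ν : Measure ℝ) (η : ℝ → ℝ) (hηint : Integrable η ν)
    (s : Set ℝ) (lam : ℝ) (hlam : 0 < lam) (u : ℝ → ℝ) (p : ℝ) :
    -(|p| * ∫ e, |η e| ∂ν) ≤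
      ∫ e in s, ((Real.exp (lam * (u e - p * η e)) - 1) / lam - u e) ∂ν := by
  have habs : (0:ℝ) ≤ ∫ e, |η e| ∂ν := integral_nonneg fun e => abs_nonneg _
  by_cases hF : Integrable
      (fun e => (Real.exp (lam * (u e - p * η e)) - 1) / lam - u e) (ν.restrict s)
  · have hg : Integrable (fun e => -(p * η e)) (ν.restrict s) :=
      ((hηint.restrict (s := s)).const_mul p).neg
    have hmono : ∫ e in s, -(p * η e) ∂ν ≤
        ∫ e in s, ((Real.exp (lam * (u e - p * η e)) - 1) / lam - u e) ∂ν := by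
      refine integral_mono hg hF fun e => ?_
      have hexp := Real.add_one_le_exp (lam * (u e - p * η e))
      have : u e - p * η e ≤ (Real.exp (lam * (u e - p * η e)) - 1) / lam := by
        rw [le_div_iff₀ hlam]
        nlinarith
      linarith
    have heq : ∫ e in s, -(p * η e) ∂ν = -(p * ∫ e in s, η e ∂ν) := by
      rw [integral_neg, integral_const_mul]
    have h1 : |∫ e in s, η e ∂ν| ≤ ∫ e in s, |η e| ∂ν := by
      simpa [Real.norm_eq_abs] using
        norm_integral_le_integral_norm (μ := ν.restrict s) η
    have h2 : ∫ e in s, |η e| ∂ν ≤ ∫ e, |η e| ∂ν :=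
      setIntegral_le_integral hηint.abs (Filter.Eventually.of_forall fun e => abs_nonneg _)
    have h3 : p * ∫ e in s, η e ∂ν ≤ |p| * ∫ e, |η e| ∂ν := by
      calc p * ∫ e in s, η e ∂ν ≤ |p * ∫ e in s, η e ∂ν| := le_abs_self _
        _ = |p| * |∫ e in s, η e ∂ν| := abs_mul _ _
        _ ≤ |p| * ∫ e, |η e| ∂ν := by
            exact mul_le_mul_of_nonneg_left (h1.trans h2) (abs_nonneg p)
    linarith [heq ▸ hmono]
  · rw [integral_undef hF]
    nlinarith [abs_nonneg p]

lemma aux_abs_ciInf_sub_ciInf {ι : Type*} [Nonempty ι] {A B : ι → ℝ}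
    (hA : BddBelow (Set.range A)) (hB : BddBelow (Set.range B)) {c : ℝ}
    (h : ∀ i, |A i - B i| ≤ c) : |(⨅ i, A i) - ⨅ i, B i| ≤ c := by
  rw [abs_sub_le_iff]
  constructor
  · have hle : ∀ i, (⨅ i, A i) - c ≤ B i := fun i => by
      have h1 := ciInf_le hA i
      have h2 := (abs_le.mp (h i)).2
      linarith
    have := le_ciInf hle
    linarith
  · have hle : ∀ i, (⨅ i, B i) - c ≤ A i := fun i => by
      have h1 := ciInf_le hB i
      have h2 := (abs_le.mp (h i)).1
      linarith
    have := le_ciInf hle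
    linarith
noncomputable section

/-- The no-signal part `f¹(z,u,p)` of the driver. -/
def f1d (ν : Measure ℝ) (η γ : ℝ → ℝ) (lam sig Cke : ℝ)
    (z : ℝ) (u : ℝ → ℝ) (p : ℝ) : ℝ :=
  lam / 2 * (sig * p - (z + Cke / lam)) ^ 2
    + ∫ e in {e | γ e = 0}, ((Real.exp (lam * (u e - p * η e)) - 1) / lam - u e) ∂ν

/-- The signal part `f²(g,u,p)` of the driver. -/
def f2d (η γ : ℝ → ℝ) (K : ℝ → Measure ℝ) (lam : ℝ)
    (g : ℝ) (u : ℝ → ℝ) (p : ℝ) : ℝ :=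
  ∫ e in {e | γ e = g}, ((Real.exp (lam * (u e - p * η e)) - 1) / lam - u e) ∂(K g)

/-- The driver `f(z,u)` of the BSDE for exponential utility maximization with signals. -/
def fdrv (ν μ : Measure ℝ) (η γ : ℝ → ℝ) (K : ℝ → Measure ℝ)
    (lam sig Cke pil pib : ℝ) (z : ℝ) (u : ℝ → ℝ) : ℝ :=
  (⨅ p : Set.Icc (-pil) pib, f1d ν η γ lam sig Cke z u p)
    + (∫ g in ({0}ᶜ : Set ℝ), (⨅ p : Set.Icc (-pil) pib, f2d η γ K lam g u p) ∂μ)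
    - Cke * z - Cke ^ 2 / (2 * lam)

/-- **Local Lipschitz continuity of the driver in the Brownian variable**: there is a
constant `C > 0` with `|f(z,u) − f(z',u)| ≤ C (1 + |z| + |z'|) |z − z'|` for all
`z, z' ∈ ℝ` and every bounded Borel `u` with `∫ u² dν < ∞`. -/
theorem driver_locally_lipschitz_in_z
    (ν : Measure ℝ) [SigmaFinite ν]
    (hν0 : ν {0} = 0)
    (hν2 : (∫⁻ e, ENNReal.ofReal (min 1 (e ^ 2)) ∂ν) < ⊤)
    (η γ : ℝ → ℝ) (hηmeas : Measurable η) (hγmeas : Measurable γ)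
    (C₀ : ℝ) (hC₀ : 0 < C₀)
    (hηb : ∀ e, |η e| ≤ C₀ * min 1 |e|)
    (hγb : ∀ e, |γ e| ≤ C₀ * min 1 |e|)
    (hηint : Integrable η ν)
    (μ : Measure ℝ)
    (hμ : ∀ B : Set ℝ, MeasurableSet B → μ B = ν (γ ⁻¹' (B \ {0})))
    (K : ℝ → Measure ℝ) (hKmeas : Measurable K)
    (hKprob : ∀ᵐ g ∂μ.restrict ({0}ᶜ : Set ℝ),
      K g Set.univ = 1 ∧ K g {e | γ e = g} = 1)
    (hdis : ∀ B : Set ℝ, MeasurableSet B →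
      ν (B ∩ {e | γ e ≠ 0}) = ∫⁻ g in ({0}ᶜ : Set ℝ), K g B ∂μ)
    (lam sig pil pib : ℝ) (hlam : 0 < lam) (hsig : 0 < sig)
    (hpil : 0 < pil) (hpib : 0 < pib)
    (κ : ℝ) (Cke : ℝ) (hCke : Cke = (κ - ∫ e, η e ∂ν) / (lam * sig)) :
    ∃ C : ℝ, 0 < C ∧
      ∀ (z z' : ℝ) (u : ℝ → ℝ), Measurable u → (∃ M : ℝ, ∀ e, |u e| ≤ M) →
        Integrable (fun e => (u e) ^ 2) ν →
        |fdrv ν μ η γ K lam sig Cke pil pib z u - fdrv ν μ η γ K lam sig Cke pil pib z' u|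
          ≤ C * (1 + |z| + |z'|) * |z - z'| := by
  haveI : Nonempty ↑(Set.Icc (-pil) pib) :=
    ⟨⟨0, by constructor <;> [linarith; linarith]⟩⟩
  refine ⟨lam * sig * (pil + pib) + lam / 2 + 2 * |Cke| + 1, by positivity, ?_⟩
  intro z z' u _ _ _
  -- lower bound for f1d, uniform in p ∈ Icc
  have hIlb : ∀ (w : ℝ), BddBelow (Set.range fun p : Set.Icc (-pil) pib =>
      f1d ν η γ lam sig Cke w u p) := by
    intro w
    refine ⟨-((pil + pib) * ∫ e, |η e| ∂ν), ?_⟩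
    rintro x ⟨⟨p, hp⟩, rfl⟩
    have habs : (0:ℝ) ≤ ∫ e, |η e| ∂ν := integral_nonneg fun e => abs_nonneg _
    have hpabs : |p| ≤ pil + pib := by
      rw [abs_le]; exact ⟨by linarith [hp.1], by linarith [hp.2]⟩
    have h1 := aux_integral_lb ν η hηint {e | γ e = 0} lam hlam u p
    have hq : (0:ℝ) ≤ lam / 2 * (sig * p - (w + Cke / lam)) ^ 2 := by positivity
    have : -((pil + pib) * ∫ e, |η e| ∂ν) ≤ -(|p| * ∫ e, |η e| ∂ν) := by
      nlinarith
    simp only [f1d]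
    linarith
  -- pointwise bound on the difference
  set Dz : ℝ := (lam * sig * (pil + pib) + lam / 2 * (|z| + |z'|) + |Cke|) * |z - z'| with hDz
  have hdiff : ∀ p : Set.Icc (-pil) pib,
      |f1d ν η γ lam sig Cke z u p - f1d ν η γ lam sig Cke z' u p| ≤ Dz := by
    rintro ⟨p, hp⟩
    have hpabs : |p| ≤ pil + pib := by
      rw [abs_le]; exact ⟨by linarith [hp.1], by linarith [hp.2]⟩
    set a : ℝ := sig * p - Cke / lam with ha
    have key : f1d ν η γ lam sig Cke z u p - f1d ν η γ lam sig Cke z' u p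
        = lam / 2 * (z' - z) * (2 * a - z - z') := by
      simp only [f1d, ha]; ring
    have haa : |a| ≤ sig * (pil + pib) + |Cke| / lam := by
      refine (abs_sub _ _).trans ?_
      have h1 : |sig * p| ≤ sig * (pil + pib) := by
        rw [abs_mul, abs_of_pos hsig]
        exact mul_le_mul_of_nonneg_left hpabs hsig.le
      have h2 : |Cke / lam| = |Cke| / lam := by
        rw [abs_div, abs_of_pos hlam]
      linarith [h2.le]
    have hsum : |2 * a - z - z'| ≤ 2 * (sig * (pil + pib) + |Cke| / lam) + |z| + |z'| := by
      have := abs_le.mp haa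
      refine abs_le.mpr ⟨?_, ?_⟩ <;>
        [skip; skip] <;>
        nlinarith [neg_abs_le z, le_abs_self z, neg_abs_le z', le_abs_self z']
    rw [key, abs_mul, abs_mul, abs_of_pos (by linarith : (0:ℝ) < lam / 2),
      abs_sub_comm z' z]
    have hfin : lam / 2 * |z - z'| * (2 * (sig * (pil + pib) + |Cke| / lam) + |z| + |z'|)
        = Dz := by
      rw [hDz]; field_simp; ring
    calc lam / 2 * |z - z'| * |2 * a - z - z'|
        ≤ lam / 2 * |z - z'| * (2 * (sig * (pil + pib) + |Cke| / lam) + |z| + |z'|) := by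
          have : (0:ℝ) ≤ lam / 2 * |z - z'| := by positivity
          exact mul_le_mul_of_nonneg_left hsum this
      _ = Dz := hfin
  have hinf := aux_abs_ciInf_sub_ciInf (hIlb z) (hIlb z') hdiff
  have hd : fdrv ν μ η γ K lam sig Cke pil pib z u
      - fdrv ν μ η γ K lam sig Cke pil pib z' u
      = ((⨅ p : Set.Icc (-pil) pib, f1d ν η γ lam sig Cke z u p)
        - ⨅ p : Set.Icc (-pil) pib, f1d ν η γ lam sig Cke z' u p)
        + (Cke * z' - Cke * z) := by
    simp only [fdrv]; ring
  rw [hd]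
  have h1 : |Cke * z' - Cke * z| ≤ |Cke| * |z - z'| := by
    rw [show Cke * z' - Cke * z = Cke * (z' - z) by ring, abs_mul, abs_sub_comm z' z]
  have h2 := (abs_add_le _ _).trans (add_le_add hinf h1)
  refine h2.trans ?_
  rw [hDz]
  have hz := abs_nonneg z
  have hz' := abs_nonneg z'
  have hzz := abs_nonneg (z - z')
  have hK := abs_nonneg Cke
  nlinarith [mul_nonneg (mul_nonneg hz hzz) hlam.le, mul_nonneg (mul_nonneg hz' hzz) hlam.le,
    mul_nonneg hzz (mul_nonneg (mul_nonneg hlam.le hsig.le) (by linarith : (0:ℝ) ≤ pil + pib)),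
    mul_nonneg hzz hK, mul_nonneg (mul_nonneg hz hzz) hK, mul_nonneg (mul_nonneg hz' hzz) hK,
    mul_nonneg hz hzz, mul_nonneg hz' hzz,
    mul_nonneg (mul_nonneg hz hzz) (mul_nonneg (mul_nonneg hlam.le hsig.le) (by linarith : (0:ℝ) ≤ pil + pib)),
    mul_nonneg (mul_nonneg hz' hzz) (mul_nonneg (mul_nonneg hlam.le hsig.le) (by linarith : (0:ℝ) ≤ pil + pib))]
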